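/- arXiv:0906.0314 — 4 statements merged into one kernel-verified Lean document; each statement's English description precedes it below -/
import Mathlib

section
/- Suppose G acts freely on X. Let H, H' ≤ G and let Q be a nonempty union of H-orbits, with at most one H-orbit per G-orbit. If H'(Q) = Q and Q is also a union of H'-orbits with at most one per G-orbit, then H' = H. In particular, the subgroup H is uniquely determined by the set Q. -/
open Pointwise

/-- Suppose `G` acts freely on `X` and `Q` is a nonempty set which is simultaneously a
union of `H`-orbits with at most one per `G`-orbit, and a union of `H'`-orbits with at
most one per `G`-orbit, with `H'(Q) = Q`.  Then `H' = H`: the subgroup is uniquely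
determined by the set `Q`. -/
theorem subgroup_unique_of_orbit_union (G : Type*) {X : Type*} [Group G] [MulAction G X]
    (hfree : ∀ (g : G) (x : X), g • x = x → g = 1)
    (H H' : Subgroup G) (A A' : Set X)
    (hA : ∀ a ∈ A, ∀ a' ∈ A, MulAction.orbit G a = MulAction.orbit G a' → a = a')
    (hA' : ∀ a ∈ A', ∀ a' ∈ A', MulAction.orbit G a = MulAction.orbit G a' → a = a')
    (Q : Set X) (hQne : Q.Nonempty)
    (hQ : Q = ⋃ a ∈ A, MulAction.orbit H a)
    (hQ' : Q = ⋃ a ∈ A', MulAction.orbit H' a)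
    (hH'Q : ∀ h ∈ H', h • Q = Q) :
    H' = H := by
  have key : ∀ (g g' : G) (x : X), g • x = g' • x → g = g' := by
    intro g g' x h
    have : (g'⁻¹ * g) • x = x := by rw [mul_smul, h, inv_smul_smul]
    have := hfree _ _ this
    rwa [inv_mul_eq_one, eq_comm] at this
  obtain ⟨q, hq⟩ := hQne
  apply le_antisymm
  · -- H' ≤ H
    intro g hg
    -- q ∈ Q decomposed via A
    have hq1 := hq
    rw [hQ] at hq1
    simp only [Set.mem_iUnion, MulAction.mem_orbit_iff] at hq1
    obtain ⟨a, ha, h1, hh1⟩ := hq1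
    -- g • q ∈ Q
    have hgq : g • q ∈ Q := by
      rw [← hH'Q g hg]
      exact ⟨q, hq, rfl⟩
    rw [hQ] at hgq
    simp only [Set.mem_iUnion, MulAction.mem_orbit_iff] at hgq
    obtain ⟨b, hb, h2, hh2⟩ := hgq
    have horb : MulAction.orbit G b = MulAction.orbit G a := by
      rw [← MulAction.orbit_smul (h2 : G) b, ← MulAction.orbit_smul (h1 : G) a]
      show MulAction.orbit G ((h2 : G) • b) = MulAction.orbit G ((h1 : G) • a)
      rw [show (h2 : G) • b = (h2 : H) • b from rfl, hh2,
        show (h1 : G) • a = (h1 : H) • a from rfl, hh1,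
        MulAction.orbit_smul]
    have hba : b = a := hA b hb a ha horb
    subst hba
    -- g • (h1 • b) = h2 • b
    have : (g * (h1 : G)) • b = (h2 : G) • b := by
      rw [mul_smul]
      rw [show (h1 : G) • b = (h1 : H) • b from rfl, hh1]
      rw [show (h2 : G) • b = (h2 : H) • b from rfl, hh2]
    have hgh := key _ _ _ this
    have : g = (h2 : G) * (h1 : G)⁻¹ := by rw [← hgh]; group
    rw [this]
    exact H.mul_mem h2.2 (H.inv_mem h1.2)
  · -- H ≤ H'
    intro g hg
    have hq1 := hq
    rw [hQ'] at hq1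
    simp only [Set.mem_iUnion, MulAction.mem_orbit_iff] at hq1
    obtain ⟨a, ha, h1, hh1⟩ := hq1
    -- g • q ∈ Q since q is in an H-orbit contained in Q
    have hgq : g • q ∈ Q := by
      have hq2 := hq
      rw [hQ] at hq2
      simp only [Set.mem_iUnion, MulAction.mem_orbit_iff] at hq2
      obtain ⟨c, hc, k, hk⟩ := hq2
      rw [hQ]
      simp only [Set.mem_iUnion, MulAction.mem_orbit_iff]
      refine ⟨c, hc, ⟨g, hg⟩ * k, ?_⟩
      show ((g * (k : G))) • c = g • q
      rw [mul_smul, show (k : G) • c = (k : H) • c from rfl, hk]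
    rw [hQ'] at hgq
    simp only [Set.mem_iUnion, MulAction.mem_orbit_iff] at hgq
    obtain ⟨b, hb, h2, hh2⟩ := hgq
    have horb : MulAction.orbit G b = MulAction.orbit G a := by
      rw [← MulAction.orbit_smul (h2 : G) b, ← MulAction.orbit_smul (h1 : G) a]
      show MulAction.orbit G ((h2 : G) • b) = MulAction.orbit G ((h1 : G) • a)
      rw [show (h2 : G) • b = (h2 : H') • b from rfl, hh2,
        show (h1 : G) • a = (h1 : H') • a from rfl, hh1,
        MulAction.orbit_smul]
    have hba : b = a := hA' b hb a ha horb
    subst hba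
    have : (g * (h1 : G)) • b = (h2 : G) • b := by
      rw [mul_smul]
      rw [show (h1 : G) • b = (h1 : H') • b from rfl, hh1]
      rw [show (h2 : G) • b = (h2 : H') • b from rfl, hh2]
    have hgh := key _ _ _ this
    have : g = (h2 : G) * (h1 : G)⁻¹ := by rw [← hgh]; group
    rw [this]
    exact H'.mul_mem h2.2 (H'.inv_mem h1.2)
end

section
/- Suppose G acts freely on X, H, H' ≤ G, and Q, Q' are nonempty unions of one H-orbit (respectively one H'-orbit) from each G-orbit in a common set S of G-orbits. Then the block systems {r(Q) : r ∈ coset representatives of H} and {r(Q') : r ∈ coset representatives of H'} are equal if and only if there exists g ∈ G with H' = gHg⁻¹ and Q' = g(Q). -/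
open Pointwise

theorem stab_eq {G X : Type*} [Group G] [MulAction G X]
    (hfree : ∀ (g : G) (x : X), g • x = x → g = 1)
    (H : Subgroup G) (A : Set X)
    (hA : ∀ a ∈ A, ∀ a' ∈ A, MulAction.orbit G a = MulAction.orbit G a' → a = a')
    (hAne : A.Nonempty) (Q : Set X)
    (hQ : Q = ⋃ a ∈ A, MulAction.orbit H a) :
    ∀ g : G, g • Q = Q ↔ g ∈ H := by
  have hsub : ∀ g ∈ H, g • Q ⊆ Q := by
    intro g hg x hx
    obtain ⟨y, hy, rfl⟩ := hx
    rw [hQ] at hy ⊢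
    simp only [Set.mem_iUnion] at hy ⊢
    obtain ⟨a, ha, k, hk⟩ := hy
    refine ⟨a, ha, ⟨g, hg⟩ * k, ?_⟩
    simp only at hk
    simp [← hk, mul_smul, Subgroup.smul_def]
  intro g
  constructor
  · intro hgQ
    obtain ⟨a, ha⟩ := hAne
    have haQ : a ∈ Q := by
      rw [hQ]; simp only [Set.mem_iUnion]
      exact ⟨a, ha, MulAction.mem_orbit_self a⟩
    have hga : g • a ∈ Q := hgQ ▸ Set.smul_mem_smul_set haQ
    rw [hQ] at hga
    simp only [Set.mem_iUnion] at hga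
    obtain ⟨b, hb, k, hk⟩ := hga
    simp only [Subgroup.smul_def] at hk
    have hba : b = a := by
      apply hA b hb a ha
      rw [MulAction.orbit_eq_iff]
      exact ⟨(k : G)⁻¹ * g, by show ((k : G)⁻¹ * g) • a = b; rw [mul_smul, ← hk]; simp⟩
    subst hba
    have hfix : ((k : G)⁻¹ * g) • b = b := by rw [mul_smul, ← hk]; simp
    have h1 := hfree _ _ hfix
    have hg : g = (k : G) := by
      have := congrArg (fun t => (k : G) * t) h1
      simpa [mul_assoc] using this
    rw [hg]; exact k.2
  · intro hg
    apply subset_antisymm (hsub g hg)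
    intro x hx
    have : g⁻¹ • x ∈ Q := hsub g⁻¹ (inv_mem hg) ⟨x, hx, rfl⟩
    exact ⟨_, this, by simp⟩

/-- Suppose a finite group `G` acts freely on a finite set `X`, `H, H' ≤ G`, and `Q`
(resp. `Q'`) is a nonempty union of one `H`-orbit (resp. one `H'`-orbit) from each
`G`-orbit in a common set of `G`-orbits.  Then the associated block systems (the sets
of translates of `Q` and of `Q'`) are equal if and only if there exists `g ∈ G` with
`H' = g H g⁻¹` and `Q' = g • Q`. -/
theorem blockSystems_eq_iff_conjugate (G : Type*) {X : Type*} [Group G] [MulAction G X]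
    [Finite G] [Finite X]
    (hfree : ∀ (g : G) (x : X), g • x = x → g = 1)
    (H H' : Subgroup G) (A A' : Set X)
    (hA : ∀ a ∈ A, ∀ a' ∈ A, MulAction.orbit G a = MulAction.orbit G a' → a = a')
    (hA' : ∀ a ∈ A', ∀ a' ∈ A', MulAction.orbit G a = MulAction.orbit G a' → a = a')
    (hAne : A.Nonempty)
    (hcommon : (⋃ a ∈ A, MulAction.orbit G a) = ⋃ a ∈ A', MulAction.orbit G a)
    (Q Q' : Set X)
    (hQ : Q = ⋃ a ∈ A, MulAction.orbit H a)
    (hQ' : Q' = ⋃ a ∈ A', MulAction.orbit H' a) :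
    {P : Set X | ∃ g : G, P = g • Q} = {P : Set X | ∃ g : G, P = g • Q'} ↔
      ∃ g : G, H' = Subgroup.map (MulAut.conj g).toMonoidHom H ∧ Q' = g • Q := by
  have hA'ne : A'.Nonempty := by
    obtain ⟨a, ha⟩ := hAne
    have : a ∈ ⋃ a ∈ A', MulAction.orbit G a := by
      rw [← hcommon]; simp only [Set.mem_iUnion]
      exact ⟨a, ha, MulAction.mem_orbit_self a⟩
    simp only [Set.mem_iUnion] at this
    obtain ⟨b, hb, _⟩ := this
    exact ⟨b, hb⟩
  have hstab := stab_eq hfree H A hA hAne Q hQ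
  have hstab' := stab_eq hfree H' A' hA' hA'ne Q' hQ'
  constructor
  · intro hEq
    have hQ'mem : Q' ∈ {P : Set X | ∃ g : G, P = g • Q} := by
      rw [hEq]; exact ⟨1, (one_smul G Q').symm⟩
    obtain ⟨g, hg⟩ := hQ'mem
    refine ⟨g, ?_, hg⟩
    ext k
    rw [← hstab' k, hg]
    constructor
    · intro hk
      have : (g⁻¹ * k * g) • Q = Q := by
        have := congrArg (fun s => g⁻¹ • s) hk
        simpa [← mul_smul, mul_assoc] using this
      refine ⟨g⁻¹ * k * g, hstab _ |>.mp this, ?_⟩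
      simp [mul_assoc]
    · rintro ⟨h, hh, rfl⟩
      have hhQ : h • Q = Q := (hstab h).mpr hh
      simp only [MulEquiv.coe_toMonoidHom, MulAut.conj_apply]
      have he : g * h * g⁻¹ * g = g * h := by group
      rw [smul_smul, he, mul_smul, hhQ]
  · rintro ⟨g, hH', rfl⟩
    ext P
    simp only [Set.mem_setOf_eq]
    constructor
    · rintro ⟨k, rfl⟩
      refine ⟨k * g⁻¹, ?_⟩
      rw [smul_smul]
      congr 1
      group
    · rintro ⟨k, rfl⟩
      exact ⟨k * g, by rw [smul_smul]⟩
end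

section
/- The exponential generating function f(x) = Σ_{n≥1} t_n x^n/n!, where t_n is the number of rooted trees with n labeled leaves in which every internal vertex has at least two children (total partition trees / phylogenetic trees), satisfies the functional equation 1 − x + 2f(x) = exp(f(x)). -/
/-- A rooted tree with leaves labeled bijectively by `X` in which every internal
vertex has at least two children, encoded as the laminar family of the leaf-label
sets of its vertices. -/
structure AssemblyTree (X : Type*) [Fintype X] where
  verts : Set (Set X)
  univ_mem : Set.univ ∈ verts
  singleton_mem : ∀ x : X, {x} ∈ verts
  nonempty_mem : ∀ A ∈ verts, A.Nonempty
  laminar : ∀ A ∈ verts, ∀ B ∈ verts, A ⊆ B ∨ B ⊆ A ∨ A ∩ B = ∅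
  two_children : ∀ A ∈ verts, ∀ B ∈ verts, B ⊂ A → ∃ C ∈ verts, C ⊂ A ∧ ¬ C ⊆ B

/-- `t n` is the number of rooted trees with `n` labeled leaves in which every
internal vertex has at least two children (total partitions). -/
noncomputable def t (n : ℕ) : ℕ := Nat.card (AssemblyTree (Fin n))

/-- The exponential generating function `f(x) = Σ_{n ≥ 1} t_n xⁿ/n!`. -/
noncomputable def f : PowerSeries ℚ :=
  PowerSeries.mk fun n => if n = 0 then 0 else (t n : ℚ) / n.factorial

/-- The composition `exp ∘ f` of a power series `f` with zero constant term into the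
exponential series: the coefficient of `xⁿ` is `Σ_k (coeff of xⁿ in fᵏ)/k!` (only
`k ≤ n` contribute since `f` has zero constant term). -/
noncomputable def expOf (F : PowerSeries ℚ) : PowerSeries ℚ :=
  PowerSeries.mk fun n =>
    ∑ k ∈ Finset.range (n + 1), (PowerSeries.coeff n (F ^ k)) / (Nat.factorial k)

/-!
Cutting a tree with `n ≥ 2` leaves at its root gives the partition of the leaves into the leaf
sets of the root's children, which has at least two blocks, together with a tree on each block;
conversely such data glue back under a new root. Adding the one-block partition, which carries
just a tree on all the leaves, gives `∑_π ∏_{B ∈ π} t_{|B|} = 2 t_n`. By the exponential formula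
the left side is `n! [xⁿ] exp (f x)`: `n! [xⁿ] f(x)ᵏ` is the sum of `∏_i t_{|g⁻¹ i|}` over all
maps `g : [n] → [k]` (a multinomial count), only surjections contribute since `t_0 = 0`, and
each partition into `k` blocks comes from `k!` surjections. The coefficients of `x⁰` and `x¹`
are checked directly.
-/

open Finset PowerSeries
open scoped Nat

def Equiv.equivSigmaEquiv {X ι : Type*} (β : ι → Type*) :
    (X ≃ Σ i, β i) ≃ Σ g : X → ι, ∀ i, {x // g x = i} ≃ β i where
  toFun e := ⟨fun x => (e x).1, fun i =>
    (e.subtypeEquiv fun _ => Iff.rfl).trans (Equiv.sigmaSubtype i)⟩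
  invFun gE := (Equiv.sigmaFiberEquiv gE.1).symm.trans (Equiv.sigmaCongrRight gE.2)
  left_inv _ := rfl
  right_inv := by
    rintro ⟨g, E⟩
    refine Sigma.ext rfl (heq_of_eq (funext fun i => Equiv.ext fun ⟨x, hx⟩ => ?_))
    subst hx
    rfl

theorem Fintype.card_equiv_eq_ite {α β : Type*} [Fintype α] [Fintype β] [DecidableEq α]
    [DecidableEq β] :
    Fintype.card (α ≃ β) = if Fintype.card α = Fintype.card β then (Fintype.card α)! else 0 := by
  split_ifs with h
  · exact Fintype.card_equiv (Fintype.equivOfCardEq h)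
  · exact Fintype.card_eq_zero_iff.2 ⟨fun e => h (Fintype.card_congr e)⟩

namespace Finpartition

variable {X ι : Type*} [Fintype X] [DecidableEq X]

def label (P : Finpartition (univ : Finset X)) (e : ι ≃ P.parts) (x : X) : ι :=
  e.symm ⟨P.part x, P.part_mem.2 (mem_univ x)⟩

variable [DecidableEq ι]

theorem filter_label_eq (P : Finpartition (univ : Finset X)) (e : ι ≃ P.parts) (i : ι) :
    ({x | P.label e x = i} : Finset X) = e i := by
  ext x
  simp only [label, mem_filter, mem_univ, true_and, Equiv.symm_apply_eq, Subtype.ext_iff]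
  exact P.part_eq_iff_mem (e i).2

theorem label_injective :
    Function.Injective fun σ : Σ P : Finpartition (univ : Finset X), ι ≃ P.parts =>
      σ.1.label σ.2 := by
  rintro ⟨P, e⟩ ⟨Q, e'⟩ h
  have hfib (i : ι) : (e i : Finset X) = e' i := by
    rw [← filter_label_eq, ← filter_label_eq]
    exact congrArg (fun g : X → ι => ({x | g x = i} : Finset X)) h
  obtain rfl : P = Q := by
    ext p
    constructor
    · intro hp
      simpa [← hfib] using (e' (e.symm ⟨p, hp⟩)).2
    · intro hp
      simpa [hfib] using (e (e'.symm ⟨p, hp⟩)).2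
  exact Sigma.ext rfl (heq_of_eq (Equiv.ext fun i => Subtype.ext (hfib i)))

theorem exists_label_eq [Fintype ι] {g : X → ι} (hg : Function.Surjective g) :
    ∃ σ : Σ P : Finpartition (univ : Finset X), ι ≃ P.parts, σ.1.label σ.2 = g := by
  let fib (i : ι) : Finset X := {x | g x = i}
  let P : Finpartition (univ : Finset X) := .ofExistsUnique (univ.image fib) (by simp)
    (fun x _ => ⟨fib (g x), by simp [fib], by
      rintro _ ⟨hp, hx⟩
      obtain ⟨i, -, rfl⟩ := mem_image.1 hp
      simp_all [fib]⟩)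
    (by
      simp only [mem_image, mem_univ, true_and, not_exists]
      intro i hi
      obtain ⟨x, rfl⟩ := hg i
      simpa [fib] using congrArg (x ∈ ·) hi)
  have hfib :
      Function.Bijective fun i => (⟨fib i, mem_image_of_mem _ (mem_univ i)⟩ : P.parts) := by
    refine ⟨fun i j hij => ?_, fun ⟨p, hp⟩ => ?_⟩
    · obtain ⟨x, rfl⟩ := hg i
      simpa [fib] using congrArg (x ∈ ·.1) hij
    · obtain ⟨i, -, rfl⟩ := mem_image.1 hp
      exact ⟨i, rfl⟩
  refine ⟨⟨P, .ofBijective _ hfib⟩, funext fun x => ?_⟩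
  rw [label, Equiv.symm_apply_eq, Subtype.ext_iff]
  exact P.part_eq_of_mem (mem_image_of_mem _ (mem_univ _)) (by simp [fib])

theorem parts_eq_singleton_of_mem {α : Type*} [DecidableEq α] {s : Finset α}
    {P : Finpartition s} (hs : s ∈ P.parts) : P.parts = {s} := by
  refine eq_singleton_iff_unique_mem.2 ⟨hs, fun q hq => ?_⟩
  obtain ⟨x, hx⟩ := P.nonempty_of_mem_parts hq
  exact P.eq_of_mem_parts hq hs hx (P.le hq hx)

end Finpartition

section ExponentialFormula

variable {X ι : Type*} [Fintype X] [DecidableEq X] [Fintype ι] [DecidableEq ι]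

theorem card_filter_fiber_card_eq_mul_prod_factorial (l : ι → ℕ)
    (hl : ∑ i, l i = Fintype.card X) :
    #{g : X → ι | ∀ i, #{x | g x = i} = l i} * ∏ i, (l i)! = (Fintype.card X)! := by
  have e : X ≃ Σ i, Fin (l i) := Fintype.equivOfCardEq (by simp [hl])
  calc #{g : X → ι | ∀ i, #{x | g x = i} = l i} * ∏ i, (l i)!
      = ∑ g : X → ι, ∏ i, Fintype.card ({x // g x = i} ≃ Fin (l i)) := by
        simp only [Fintype.card_equiv_eq_ite, Fintype.card_subtype, Fintype.card_fin,
          Finset.prod_ite_zero, mem_univ, true_implies, ← Finset.sum_filter]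
        rw [Finset.sum_congr rfl fun g hg => Finset.prod_congr rfl fun i _ => by
          rw [(mem_filter.1 hg).2 i], sum_const, smul_eq_mul]
    _ = Fintype.card (X ≃ Σ i, Fin (l i)) := by
        rw [Fintype.card_congr (Equiv.equivSigmaEquiv _), Fintype.card_sigma]
        simp only [Fintype.card_pi]
    _ = (Fintype.card X)! := Fintype.card_equiv e

theorem factorial_mul_coeff_pow_card (a : ℕ → ℚ) :
    (Fintype.card X)! * coeff (Fintype.card X) ((mk fun n => a n / n !) ^ Fintype.card ι)
      = ∑ g : X → ι, ∏ i, a #{x | g x = i} := by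
  let fiberCard (g : X → ι) : ι →₀ ℕ := Finsupp.equivFunOnFinite.symm fun i => #{x | g x = i}
  have hmaps (g : X → ι) : fiberCard g ∈ finsuppAntidiag univ (Fintype.card X) := by
    simpa [fiberCard, Finsupp.equivFunOnFinite_symm_apply_support] using
      (card_eq_sum_card_fiberwise (f := g) (s := univ) (t := univ) (by simp)).symm
  rw [← card_univ (α := ι), ← prod_const, coeff_prod, mul_sum,
    ← sum_fiberwise_of_maps_to fun g _ => hmaps g]
  refine sum_congr rfl fun l hl => ?_
  have hfiber : ∀ g : X → ι, fiberCard g = l ↔ ∀ i, #{x | g x = i} = l i := fun g =>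
    Finsupp.ext_iff
  have hcount := card_filter_fiber_card_eq_mul_prod_factorial l (mem_finsuppAntidiag.1 hl).1
  rw [sum_congr (filter_congr fun g _ => hfiber g) fun g hg => prod_congr rfl fun i _ => by
    rw [(mem_filter.1 hg).2 i], sum_const, nsmul_eq_mul, ← hcount]
  simp only [coeff_mk, prod_div_distrib]
  push_cast
  field_simp

theorem sum_prod_fiber_eq_sum_finpartition {M : Type*} [CommSemiring M] (a : ℕ → M)
    (ha : a 0 = 0) :
    ∑ g : X → ι, ∏ i, a #{x | g x = i}
      = ∑ P : Finpartition (univ : Finset X),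
          Fintype.card (ι ≃ P.parts) • ∏ p ∈ P.parts, a #p := by
  have hsigma : ∑ P : Finpartition (univ : Finset X), Fintype.card (ι ≃ P.parts) •
      ∏ p ∈ P.parts, a #p = ∑ σ : Σ P : Finpartition (univ : Finset X), ι ≃ P.parts,
        ∏ p ∈ σ.1.parts, a #p := by
    simp only [Fintype.sum_sigma, sum_const, card_univ]
  rw [hsigma]
  symm
  refine sum_of_injOn _ Finpartition.label_injective.injOn (by simp) ?_ ?_
  · intro g _ hg
    by_contra hprod
    refine hg ?_
    have hsurj : Function.Surjective g := fun i => by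
      by_contra hi
      refine hprod (prod_eq_zero (mem_univ i) ?_)
      rw [filter_eq_empty_iff.2 fun x _ hx => hi ⟨x, hx⟩, card_empty, ha]
    obtain ⟨σ, hσ⟩ := Finpartition.exists_label_eq hsurj
    exact ⟨σ, mem_coe.2 (mem_univ σ), hσ⟩
  · rintro ⟨P, e⟩ -
    simp only [Finpartition.filter_label_eq]
    rw [← prod_coe_sort P.parts]
    exact (Fintype.prod_equiv e _ _ fun i => rfl).symm

theorem factorial_mul_coeff_expOf (a : ℕ → ℚ) (ha : a 0 = 0) :
    (Fintype.card X)! * coeff (Fintype.card X) (expOf (mk fun n => a n / n !))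
      = ∑ P : Finpartition (univ : Finset X), ∏ p ∈ P.parts, a #p := by
  have hk (k : ℕ) : (Fintype.card X)! * coeff (Fintype.card X) ((mk fun n => a n / n !) ^ k)
      / k ! = ∑ P : Finpartition (univ : Finset X),
        if k = #P.parts then ∏ p ∈ P.parts, a #p else 0 := by
    rw [← Fintype.card_fin k, factorial_mul_coeff_pow_card,
      sum_prod_fiber_eq_sum_finpartition a ha, Fintype.card_fin, sum_div]
    refine sum_congr rfl fun P _ => ?_
    rw [Fintype.card_equiv_eq_ite, Fintype.card_fin, Fintype.card_coe]
    split_ifs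
    · rw [nsmul_eq_mul]
      field_simp
    · simp
  rw [expOf, coeff_mk, mul_sum]
  simp only [mul_div_assoc', hk]
  rw [sum_comm]
  refine sum_congr rfl fun P _ => ?_
  rw [sum_ite_eq', if_pos (mem_range_succ_iff.2 (P.card_parts_le_card.trans_eq card_univ))]

end ExponentialFormula

namespace AssemblyTree

variable {X Y : Type*} [Fintype X] [Fintype Y]

@[ext] theorem ext {T S : AssemblyTree X} (h : T.verts = S.verts) : T = S := by
  cases T; cases S; congr

instance : Finite (AssemblyTree X) := Finite.of_injective verts fun _ _ => ext

/-- The axiom `two_children` follows from the others, since singletons are vertices. -/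
def ofLaminar (verts : Set (Set X)) (univ_mem : Set.univ ∈ verts)
    (singleton_mem : ∀ x : X, {x} ∈ verts) (nonempty_mem : ∀ A ∈ verts, A.Nonempty)
    (laminar : ∀ A ∈ verts, ∀ B ∈ verts, A ⊆ B ∨ B ⊆ A ∨ A ∩ B = ∅) : AssemblyTree X where
  verts := verts
  univ_mem := univ_mem
  singleton_mem := singleton_mem
  nonempty_mem := nonempty_mem
  laminar := laminar
  two_children A _ B hB hBA := by
    obtain ⟨x, hxA, hxB⟩ := Set.exists_of_ssubset hBA
    obtain ⟨b, hb⟩ := nonempty_mem B hB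
    refine ⟨{x}, singleton_mem x, Set.ssubset_iff_exists.2 ⟨by simpa using hxA, b, hBA.1 hb, ?_⟩,
      by simpa using hxB⟩
    rintro rfl
    exact hxB hb

def map (e : X ≃ Y) (T : AssemblyTree X) : AssemblyTree Y :=
  ofLaminar (Set.image e '' T.verts)
    ⟨Set.univ, T.univ_mem, by simp⟩
    (fun y => ⟨{e.symm y}, T.singleton_mem _, by simp⟩)
    (by rintro _ ⟨A, hA, rfl⟩; exact (T.nonempty_mem A hA).image e)
    (by
      rintro _ ⟨A, hA, rfl⟩ _ ⟨B, hB, rfl⟩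
      rw [← Set.image_inter e.injective, Set.image_eq_empty]
      exact (T.laminar A hA B hB).imp Set.image_mono (Or.imp_left Set.image_mono))

theorem map_symm_map (e : X ≃ Y) (T : AssemblyTree X) : (T.map e).map e.symm = T := by
  ext1
  simp [map, ofLaminar, Set.image_image]

def relabel (e : X ≃ Y) : AssemblyTree X ≃ AssemblyTree Y where
  toFun := map e
  invFun := map e.symm
  left_inv := map_symm_map e
  right_inv := map_symm_map e.symm

theorem card_eq_t : Nat.card (AssemblyTree X) = t (Fintype.card X) :=
  Nat.card_congr (relabel (Fintype.equivFin X))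

def restrict (T : AssemblyTree X) (s : Finset X) (hs : (s : Set X) ∈ T.verts) :
    AssemblyTree s :=
  ofLaminar {S | Subtype.val '' S ∈ T.verts}
    (by simpa using hs)
    (fun x => by simpa using T.singleton_mem x)
    (fun S hS => by
      obtain ⟨_, y, hy, -⟩ := T.nonempty_mem _ hS
      exact ⟨y, hy⟩)
    (fun S hS S' hS' => by
      simpa [Set.image_subset_image_iff Subtype.val_injective,
        ← Set.image_inter Subtype.val_injective] using T.laminar _ hS _ hS')

theorem mem_restrict {T : AssemblyTree X} {s : Finset X} {hs : (s : Set X) ∈ T.verts}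
    {S : Set s} : S ∈ (T.restrict s hs).verts ↔ Subtype.val '' S ∈ T.verts := Iff.rfl

def IsRootChild (T : AssemblyTree X) (A : Set X) : Prop := Maximal (· ∈ T.verts \ {Set.univ}) A

theorem exists_isRootChild (T : AssemblyTree X) {A : Set X} (hA : A ∈ T.verts)
    (hA' : A ≠ Set.univ) : ∃ C, A ⊆ C ∧ T.IsRootChild C :=
  Finite.exists_le_maximal (p := (· ∈ T.verts \ {Set.univ})) ⟨hA, hA'⟩

theorem IsRootChild.eq_of_mem {T : AssemblyTree X} {C D : Set X} (hC : T.IsRootChild C)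
    (hD : T.IsRootChild D) {x : X} (hxC : x ∈ C) (hxD : x ∈ D) : C = D := by
  rcases T.laminar C hC.1.1 D hD.1.1 with h | h | h
  · exact h.antisymm (hC.2 hD.1 h)
  · exact (hD.2 hC.1 h).antisymm h
  · exact absurd (h ▸ ⟨hxC, hxD⟩ : x ∈ (∅ : Set X)) id

variable [DecidableEq X]

theorem coe_ne_univ_of_univ_notMem {P : Finpartition (univ : Finset X)} (hP : univ ∉ P.parts)
    {p : Finset X} (hp : p ∈ P.parts) : (p : Set X) ≠ Set.univ := by
  rw [← coe_univ, Ne, coe_inj]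
  rintro rfl
  exact hP hp

abbrev Forest (P : Finpartition (univ : Finset X)) : Type _ := ∀ p : P.parts, AssemblyTree p

open scoped Classical in
noncomputable def rootPartition (T : AssemblyTree X) (h : 1 < Fintype.card X) :
    Finpartition (univ : Finset X) :=
  .ofExistsUnique {p | T.IsRootChild p} (by simp)
    (fun x _ => by
      have hx : ({x} : Set X) ≠ Set.univ := fun hx => by
        obtain ⟨y, hy⟩ := Fintype.exists_ne_of_one_lt_card h x
        exact hy (Set.eq_univ_iff_forall.1 hx y)
      obtain ⟨C, hxC, hC⟩ := T.exists_isRootChild (T.singleton_mem x) hx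
      lift C to Finset X using Set.toFinite C
      refine ⟨C, by simpa using ⟨hC, hxC rfl⟩, fun D hD => ?_⟩
      simp only [mem_filter, mem_univ, true_and] at hD
      exact Finset.coe_injective (hD.1.eq_of_mem hC hD.2 (hxC rfl)))
    (by
      simp only [mem_filter, mem_univ, true_and, coe_empty]
      exact fun h => (T.nonempty_mem _ h.1.1).ne_empty rfl)

theorem mem_rootPartition {T : AssemblyTree X} {h : 1 < Fintype.card X} {p : Finset X} :
    p ∈ (T.rootPartition h).parts ↔ T.IsRootChild p := by
  simp [rootPartition]

theorem univ_notMem_rootPartition (T : AssemblyTree X) (h : 1 < Fintype.card X) :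
    univ ∉ (T.rootPartition h).parts :=
  fun hu => (mem_rootPartition.1 hu).1.2 coe_univ

noncomputable def decompose (T : AssemblyTree X) (h : 1 < Fintype.card X) :
    Forest (T.rootPartition h) :=
  fun p => T.restrict p (mem_rootPartition.1 p.2).1.1

theorem sigma_forest_ext {P Q : {P : Finpartition (univ : Finset X) // univ ∉ P.parts}}
    {F : Forest P.1} {G : Forest Q.1} (hPQ : P = Q)
    (hFG : ∀ p (hp : p ∈ P.1.parts) (hq : p ∈ Q.1.parts), F ⟨p, hp⟩ = G ⟨p, hq⟩) :
    (⟨P, F⟩ : Σ P : {P : Finpartition (univ : Finset X) // univ ∉ P.parts}, Forest P.1) =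
      ⟨Q, G⟩ := by
  subst hPQ
  exact congrArg _ (funext fun p => hFG p p.2 p.2)

section Glue

variable [Nonempty X]

def glue (P : Finpartition (univ : Finset X)) (F : Forest P) : AssemblyTree X :=
  ofLaminar (insert Set.univ (⋃ p, Set.image Subtype.val '' (F p).verts))
    (Set.mem_insert _ _)
    (fun x => Set.mem_insert_of_mem _ <| Set.mem_iUnion.2
      ⟨⟨P.part x, P.part_mem.2 (mem_univ x)⟩, {⟨x, P.mem_part (mem_univ x)⟩},
        (F _).singleton_mem _, Set.image_singleton⟩)
    (by
      rintro _ (rfl | hA)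
      · exact Set.univ_nonempty
      · obtain ⟨p, S, hS, rfl⟩ := by simpa only [Set.mem_iUnion, Set.mem_image] using hA
        exact ((F p).nonempty_mem S hS).image _)
    (by
      rintro _ (rfl | hA) _ (rfl | hB)
      · simp
      · simp
      · simp
      obtain ⟨p, S, hS, rfl⟩ := by simpa only [Set.mem_iUnion, Set.mem_image] using hA
      obtain ⟨q, S', hS', rfl⟩ := by simpa only [Set.mem_iUnion, Set.mem_image] using hB
      obtain rfl | hpq := eq_or_ne p q
      · simpa [Set.image_subset_image_iff Subtype.val_injective,
          ← Set.image_inter Subtype.val_injective] using (F p).laminar S hS S' hS'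
      · have hdisj : Disjoint (p : Set X) q :=
          Finset.disjoint_coe.2 (P.disjoint p.2 q.2 (Subtype.coe_ne_coe.2 hpq))
        exact .inr <| .inr <| Set.disjoint_iff_inter_eq_empty.1 <|
          hdisj.mono (Subtype.coe_image_subset _ _) (Subtype.coe_image_subset _ _))

theorem mem_glue {P : Finpartition (univ : Finset X)} {F : Forest P} {A : Set X} :
    A ∈ (glue P F).verts ↔ A = Set.univ ∨ ∃ p, ∃ S ∈ (F p).verts, Subtype.val '' S = A := by
  simp [glue, ofLaminar]

variable {P : Finpartition (univ : Finset X)} {F : Forest P}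

theorem coe_mem_glue (p : P.parts) : (p : Set X) ∈ (glue P F).verts :=
  mem_glue.2 <| .inr ⟨p, Set.univ, (F p).univ_mem, by simp⟩

theorem isRootChild_glue_iff (hP : univ ∉ P.parts) {A : Set X} :
    (glue P F).IsRootChild A ↔ ∃ p ∈ P.parts, (p : Set X) = A := by
  constructor
  · rintro hA
    obtain rfl | ⟨p, S, -, rfl⟩ := mem_glue.1 hA.1.1
    · exact absurd rfl hA.1.2
    have hsub : Subtype.val '' S ⊆ (p : Set X) := Subtype.coe_image_subset _ _
    exact ⟨p, p.2,
      (hA.2 ⟨coe_mem_glue p, coe_ne_univ_of_univ_notMem hP p.2⟩ hsub).antisymm hsub⟩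
  · rintro ⟨p, hp, rfl⟩
    refine ⟨⟨coe_mem_glue ⟨p, hp⟩, coe_ne_univ_of_univ_notMem hP hp⟩, fun B hB hpB => ?_⟩
    obtain rfl | ⟨q, S, -, rfl⟩ := mem_glue.1 hB.1
    · exact absurd rfl hB.2
    obtain ⟨x, hx⟩ := P.nonempty_of_mem_parts hp
    have hxq : x ∈ (q : Finset X) := Subtype.coe_image_subset _ _ (hpB hx)
    rw [P.eq_of_mem_parts hp q.2 hx hxq]
    exact Subtype.coe_image_subset _ _

theorem image_val_mem_glue_iff (hP : univ ∉ P.parts) (p : P.parts) (S : Set p) :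
    Subtype.val '' S ∈ (glue P F).verts ↔ S ∈ (F p).verts := by
  refine ⟨fun hS => ?_, fun hS => mem_glue.2 (.inr ⟨p, S, hS, rfl⟩)⟩
  obtain hS | ⟨q, S', hS', hSS'⟩ := mem_glue.1 hS
  · refine absurd ?_ (coe_ne_univ_of_univ_notMem hP p.2)
    exact Set.eq_univ_of_univ_subset (hS ▸ Subtype.coe_image_subset _ _)
  obtain ⟨y, hy⟩ := (F q).nonempty_mem S' hS'
  have hyp : y.1 ∈ (p : Finset X) := Subtype.coe_image_subset _ S (hSS' ▸ ⟨y, hy, rfl⟩)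
  obtain rfl : q = p := Subtype.ext (P.eq_of_mem_parts q.2 p.2 y.2 hyp)
  rwa [← Set.image_injective.2 Subtype.val_injective hSS']

theorem rootPartition_glue (hP : univ ∉ P.parts) (h : 1 < Fintype.card X) :
    (glue P F).rootPartition h = P := by
  ext p
  rw [mem_rootPartition, isRootChild_glue_iff hP]
  simp

theorem glue_decompose (T : AssemblyTree X) (h : 1 < Fintype.card X) :
    glue (T.rootPartition h) (T.decompose h) = T := by
  ext A
  rw [mem_glue]
  constructor
  · rintro (rfl | ⟨p, S, hS, rfl⟩)
    · exact T.univ_mem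
    · exact mem_restrict.1 hS
  · intro hA
    refine or_iff_not_imp_left.2 fun hAu => ?_
    obtain ⟨C, hAC, hC⟩ := T.exists_isRootChild hA hAu
    lift C to Finset X using Set.toFinite C
    have himage : Subtype.val '' (Subtype.val ⁻¹' A : Set C) = A :=
      Set.image_preimage_eq_of_subset fun x hx => ⟨⟨x, hAC hx⟩, rfl⟩
    exact ⟨⟨C, mem_rootPartition.2 hC⟩, Subtype.val ⁻¹' A, mem_restrict.2 (himage.symm ▸ hA),
      himage⟩

noncomputable def forestEquiv (h : 1 < Fintype.card X) :
    (Σ P : {P : Finpartition (univ : Finset X) // univ ∉ P.parts}, Forest P.1) ≃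
      AssemblyTree X where
  toFun σ := glue σ.1.1 σ.2
  invFun T := ⟨⟨T.rootPartition h, T.univ_notMem_rootPartition h⟩, T.decompose h⟩
  left_inv := by
    rintro ⟨⟨P, hP⟩, F⟩
    refine sigma_forest_ext (Subtype.ext (rootPartition_glue hP h)) fun p _ hp => ?_
    ext S
    exact image_val_mem_glue_iff hP ⟨p, hp⟩ S
  right_inv T := glue_decompose T h

end Glue

theorem card_forest (P : Finpartition (univ : Finset X)) :
    Nat.card (Forest P) = ∏ p ∈ P.parts, t #p := by
  rw [Nat.card_pi, ← prod_coe_sort P.parts]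
  simp [card_eq_t]

end AssemblyTree

theorem t_zero : t 0 = 0 := by
  have : IsEmpty (AssemblyTree (Fin 0)) := ⟨fun T => (T.nonempty_mem _ T.univ_mem).ne_empty
    (Set.eq_empty_of_isEmpty _)⟩
  simp [t]

theorem t_one : t 1 = 1 := by
  have hverts (T : AssemblyTree (Fin 1)) : T.verts = {Set.univ} :=
    Set.eq_singleton_iff_unique_mem.2
      ⟨T.univ_mem, fun A hA => (T.nonempty_mem A hA).eq_univ⟩
  have : Unique (AssemblyTree (Fin 1)) :=
    { default := .ofLaminar {Set.univ} rfl (fun x => Subsingleton.eq_univ_of_nonempty ⟨x, rfl⟩)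
        (by simp) (by simp)
      uniq T := AssemblyTree.ext (hverts T) }
  exact Nat.card_unique

theorem sum_prod_t_eq_two_mul {X : Type*} [Fintype X] [DecidableEq X] (h : 1 < Fintype.card X) :
    ∑ P : Finpartition (univ : Finset X), ∏ p ∈ P.parts, t #p = 2 * t (Fintype.card X) := by
  have : Nonempty X := Fintype.card_pos_iff.1 (by omega)
  rw [← sum_filter_add_sum_filter_not univ (fun P => univ ∈ P.parts), two_mul]
  congr 1
  · rw [sum_eq_single_of_mem (Finpartition.indiscrete univ_nonempty.ne_empty) (by simp)
      fun P hP hne => absurd (Finpartition.ext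
        (Finpartition.parts_eq_singleton_of_mem (mem_filter.1 hP).2)) hne]
    simp
  · rw [← AssemblyTree.card_eq_t, ← Nat.card_congr (AssemblyTree.forestEquiv h), Nat.card_sigma]
    simp only [AssemblyTree.card_forest]
    exact sum_subtype _ (by simp) _

theorem f_eq_mk : f = PowerSeries.mk fun n => (t n : ℚ) / n ! := by
  ext n
  rcases eq_or_ne n 0 with rfl | hn <;> simp [f, t_zero, *]

/-- The functional equation `1 − x + 2 f(x) = exp (f(x))` for the exponential
generating function of the number of assembly trees (total partitions). -/
theorem functional_equation : 1 - PowerSeries.X + 2 * f = expOf f := by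
  ext n
  rw [two_mul, map_add, map_sub, map_add]
  match n with
  | 0 => simp [expOf, f]
  | 1 => simp [expOf, f, t_one, sum_range_succ]
  | n + 2 =>
    have hexp := factorial_mul_coeff_expOf (X := Fin (n + 2)) (fun m => (t m : ℚ))
      (by simp [t_zero])
    simp only [← f_eq_mk, Fintype.card_fin, ← Nat.cast_prod, ← Nat.cast_sum] at hexp
    rw [sum_prod_t_eq_two_mul (X := Fin (n + 2)) (by simp), Fintype.card_fin] at hexp
    rw [eq_div_of_mul_eq (by positivity) ((mul_comm _ _).trans hexp)]
    simp [f, coeff_one, coeff_X]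
    ring
end

section
/- Let G be a finite group, H ≤ G a subgroup, N(H) its normalizer in G, and suppose G acts freely on X. Fix a nonempty subset Q ⊆ X which is a union of one H-orbit from each G-orbit in a fixed set S of G-orbits. Then for g, g' ∈ G, the pairs (gHg⁻¹, g(Q)) and (g'Hg'⁻¹, g'(Q)) are equal if and only if g and g' lie in the same left coset of H in G; consequently, the number of distinct pairs (gHg⁻¹, g(Q)) as g ranges over G is (G : H). -/
open Pointwise

theorem conj_map_mem (G : Type*) [Group G] (H : Subgroup G) (k : G) (hk : k ∈ H) :
    Subgroup.map (MulAut.conj k).toMonoidHom H = H := by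
  ext x
  simp only [Subgroup.mem_map, MulEquiv.coe_toMonoidHom, MulAut.conj_apply]
  constructor
  · rintro ⟨y, hy, rfl⟩
    exact mul_mem (mul_mem hk hy) (inv_mem hk)
  · intro hx
    exact ⟨k⁻¹ * x * k, mul_mem (mul_mem (inv_mem hk) hx) hk, by group⟩

/-- Let a finite group `G` act freely on a finite set `X`, `H ≤ G`, and let `Q` be a
nonempty union of one `H`-orbit from each `G`-orbit in a fixed set of `G`-orbits (the
orbits of points of a set `A` of pairwise `G`-inequivalent representatives).  Then the
pairs `(g H g⁻¹, g • Q)` and `(g' H g'⁻¹, g' • Q)` coincide if and only if `g` and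
`g'` lie in the same left coset of `H`; consequently the number of distinct such pairs
is the index `(G : H)`. -/
theorem conjugate_pairs_count (G : Type*) [Group G] [Fintype G]
    (X : Type*) [Fintype X] [MulAction G X]
    (hfree : ∀ (g : G) (x : X), g • x = x → g = 1)
    (H : Subgroup G) (A : Set X)
    (hA : ∀ a ∈ A, ∀ a' ∈ A, MulAction.orbit G a = MulAction.orbit G a' → a = a')
    (hAne : A.Nonempty)
    (Q : Set X) (hQ : Q = ⋃ a ∈ A, MulAction.orbit H a) :
    (∀ g g' : G,
      (Subgroup.map (MulAut.conj g).toMonoidHom H =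
          Subgroup.map (MulAut.conj g').toMonoidHom H ∧ g • Q = g' • Q) ↔
        g⁻¹ * g' ∈ H) ∧
    Nat.card {p : Subgroup G × Set X |
      ∃ g : G, p = (Subgroup.map (MulAut.conj g).toMonoidHom H, g • Q)} = H.index := by
  -- H-elements stabilize Q
  have hQsm : ∀ k : G, k ∈ H → k • Q = Q := by
    intro k hk
    subst hQ
    ext x
    simp only [Set.mem_smul_set, Set.mem_iUnion, MulAction.mem_orbit_iff]
    constructor
    · rintro ⟨y, ⟨a, ha, h, rfl⟩, rfl⟩
      exact ⟨a, ha, ⟨k, hk⟩ * h, by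
        show ((⟨k, hk⟩ : H) * h : G) • a = k • ((h : G) • a)
        rw [mul_smul]⟩
    · rintro ⟨a, ha, h, rfl⟩
      refine ⟨((⟨k, hk⟩ : H)⁻¹ * h : H) • a, ⟨a, ha, _, rfl⟩, ?_⟩
      show k • (((⟨k, hk⟩ : H)⁻¹ * h : G) • a) = (h : G) • a
      rw [← mul_smul]
      congr 1
      simp [mul_assoc]
  -- main iff
  have main : ∀ g g' : G,
      (Subgroup.map (MulAut.conj g).toMonoidHom H =
          Subgroup.map (MulAut.conj g').toMonoidHom H ∧ g • Q = g' • Q) ↔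
        g⁻¹ * g' ∈ H := by
    intro g g'
    constructor
    · rintro ⟨-, hsm⟩
      set k := g⁻¹ * g' with hkdef
      have hkQ : k • Q = Q := by
        have h1 : g'⁻¹ • (g • Q) = g'⁻¹ • (g' • Q) := by rw [hsm]
        rw [smul_smul, smul_smul, inv_mul_cancel, one_smul] at h1
        have h2 : k⁻¹ • Q = Q := by
          rw [hkdef, mul_inv_rev, inv_inv]
          exact h1
        conv_lhs => rw [← h2, smul_smul, mul_inv_cancel, one_smul]
      obtain ⟨a, ha⟩ := hAne
      have haQ : a ∈ Q := by
        rw [hQ]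
        exact Set.mem_biUnion ha (MulAction.mem_orbit_self a)
      have hkaQ : k • a ∈ Q := by
        rw [← hkQ]
        exact Set.smul_mem_smul_set haQ
      rw [hQ] at hkaQ
      simp only [Set.mem_iUnion, MulAction.mem_orbit_iff] at hkaQ
      obtain ⟨a', ha', h, hh⟩ := hkaQ
      have horb : MulAction.orbit G a' = MulAction.orbit G a := by
        have h1 : k • a ∈ MulAction.orbit G a' := ⟨h, hh⟩
        have h2 : k • a ∈ MulAction.orbit G a := ⟨k, rfl⟩
        exact (MulAction.orbit_eq_iff.mpr h1).symm.trans (MulAction.orbit_eq_iff.mpr h2)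
      have haa : a' = a := hA a' ha' a ha horb
      rw [haa] at hh
      have hfix : ((h : G)⁻¹ * k) • a = a := by
        rw [mul_smul]
        have : (h : G) • a = k • a := hh
        rw [← this]
        rw [smul_smul, inv_mul_cancel, one_smul]
      have h1 : (h : G)⁻¹ * k = 1 := hfree _ _ hfix
      have h2 : (h : G) = k := by
        have := congrArg (fun z => (h : G) * z) h1
        simpa [mul_assoc] using this.symm
      rw [← h2]
      exact h.2
    · intro hk
      have hg' : g' = g * (g⁻¹ * g') := by group
      constructor
      · rw [hg']
        have : (MulAut.conj (g * (g⁻¹ * g'))).toMonoidHom =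
            (MulAut.conj g).toMonoidHom.comp (MulAut.conj (g⁻¹ * g')).toMonoidHom := by
          ext x; simp [MulAut.conj_apply, mul_assoc]
        rw [this, ← Subgroup.map_map, conj_map_mem G H _ hk]
      · rw [hg', mul_smul, hQsm _ hk]
  refine ⟨main, ?_⟩
  -- bijection G ⧸ H ≃ set of pairs
  have e : (G ⧸ H) ≃ {p : Subgroup G × Set X |
      ∃ g : G, p = (Subgroup.map (MulAut.conj g).toMonoidHom H, g • Q)} := by
    refine Equiv.ofBijective
      (Quotient.lift (fun g => (⟨(Subgroup.map (MulAut.conj g).toMonoidHom H, g • Q),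
        g, rfl⟩ : {p : Subgroup G × Set X |
          ∃ g : G, p = (Subgroup.map (MulAut.conj g).toMonoidHom H, g • Q)}))
        ?_) ⟨?_, ?_⟩
    · intro a b hab
      have hab' : a⁻¹ * b ∈ H := QuotientGroup.leftRel_apply.mp hab
      obtain ⟨hc, hs⟩ := (main a b).mpr hab'
      exact Subtype.ext (Prod.ext hc hs)
    · intro x y
      induction x using Quotient.inductionOn
      induction y using Quotient.inductionOn
      rename_i a b
      intro hxy
      have := Subtype.ext_iff.mp hxy
      have hc : Subgroup.map (MulAut.conj a).toMonoidHom H =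
          Subgroup.map (MulAut.conj b).toMonoidHom H := congrArg Prod.fst this
      have hs : a • Q = b • Q := congrArg Prod.snd this
      exact Quotient.sound (QuotientGroup.leftRel_apply.mpr ((main a b).mp ⟨hc, hs⟩))
    · rintro ⟨p, g, rfl⟩
      exact ⟨⟦g⟧, rfl⟩
  rw [Subgroup.index, ← Nat.card_congr e]
end
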